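/- arXiv:1010.1472 — 10 statements merged into one kernel-verified Lean document; each statement's English description precedes it below -/
import Mathlib

section
/- Let E be a real Banach space, μ > 0, ε > 0, and P : E × E → E a continuous bilinear map satisfying ‖P(f,g)‖ ≤ μ‖f‖‖g‖ for all f,g ∈ E. Let f₀ ∈ E with ‖f₀‖ ≤ 1 and define the Wild coefficients f_{k+1} = (1/(k+1)) ∑_{h=0}^{k} P(f_h, f_{k−h})/μ. For t ≥ 0 set τ(t) = 1 − e^{−μt/ε} and f(t) = (1 − τ(t)) ∑_{k=0}^{∞} τ(t)^k f_k. Then the series converges absolutely for every t ≥ 0, f(0) = f₀, and f is differentiable on (0,∞) with f′(t) = (1/ε)(P(f(t), f(t)) − μ f(t)) for all t > 0. -/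
/-!
The Wild series `S(τ) = ∑ τ^k f_k` has coefficients of norm at most `1` (induction on the
recurrence, using `‖P(f, g)‖ ≤ μ‖f‖‖g‖`), so it converges on the unit ball, and differentiating
termwise and comparing with the Cauchy product of `S` with itself under `P`, the recurrence says
exactly that `S' = μ⁻¹ P(S, S)`. With `w = e^{-μt/ε} = 1 - τ`, so that `w' = -(μ/ε) w`, the chain
rule turns this into `(w S(1 - w))' = (1/ε)(P(wS, wS) - μ wS)`, and `w S(1 - w)` is `f`.
-/

open Finset

namespace ContinuousLinearMap

variable {𝕜 E F G : Type*} [NontriviallyNormedField 𝕜]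
  [NormedAddCommGroup E] [NormedSpace 𝕜 E] [NormedAddCommGroup F] [NormedSpace 𝕜 F]
  [NormedAddCommGroup G] [NormedSpace 𝕜 G] [CompleteSpace G]

theorem summable_apply_prod_of_summable_norm (B : E →L[𝕜] F →L[𝕜] G) {a : ℕ → E} {b : ℕ → F}
    (ha : Summable fun k => ‖a k‖) (hb : Summable fun k => ‖b k‖) :
    Summable fun p : ℕ × ℕ => B (a p.1) (b p.2) := by
  refine .of_norm_bounded ((ha.mul_left ‖B‖).mul_of_nonneg hb (fun _ => by positivity)
    (fun _ => norm_nonneg _)) fun p => ?_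
  simpa [mul_assoc] using B.le_opNorm₂ (a p.1) (b p.2)

theorem hasSum_sum_range_of_summable_norm [CompleteSpace E] [CompleteSpace F]
    (B : E →L[𝕜] F →L[𝕜] G) {a : ℕ → E} {b : ℕ → F}
    (ha : Summable fun k => ‖a k‖) (hb : Summable fun k => ‖b k‖) :
    HasSum (fun n => ∑ k ∈ range (n + 1), B (a k) (b (n - k))) (B (∑' k, a k) (∑' k, b k)) := by
  have hprod := (B.summable_apply_prod_of_summable_norm ha hb).hasSum
  have hvalue : ∑' p : ℕ × ℕ, B (a p.1) (b p.2) = B (∑' k, a k) (∑' k, b k) :=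
    (hprod.prod_fiberwise fun i => (B (a i)).hasSum hb.of_norm.hasSum).unique
      ((B.flip (∑' k, b k)).hasSum ha.of_norm.hasSum)
  rw [hvalue, ← HasAntidiagonal.sigmaAntidiagonalEquivProd.hasSum_iff] at hprod
  refine hprod.sigma fun n => ?_
  rw [← Nat.sum_antidiagonal_eq_sum_range_succ (fun k l => B (a k) (b l)), ← sum_finset_coe]
  exact hasSum_fintype _

end ContinuousLinearMap

theorem summable_nat_mul_pow_sub_one {r : ℝ} (hr : |r| < 1) :
    Summable fun k : ℕ => (k : ℝ) * r ^ (k - 1) := by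
  refine (summable_nat_add_iff 1).1 ?_
  simpa [add_mul] using
    (summable_pow_mul_geometric_of_norm_lt_one 1 hr).add (summable_geometric_of_abs_lt_one hr)

section PowerSeries

variable {𝕜 E : Type*} [RCLike 𝕜] [NormedAddCommGroup E] [NormedSpace 𝕜 E]
  {F : ℕ → E} {C : ℝ} {q : 𝕜}

theorem summable_norm_pow_smul_of_norm_le (hF : ∀ k, ‖F k‖ ≤ C) (hq : ‖q‖ < 1) :
    Summable fun k => ‖q ^ k • F k‖ := by
  refine .of_nonneg_of_le (fun _ => norm_nonneg _) (fun k => ?_)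
    ((summable_geometric_of_lt_one (norm_nonneg q) hq).mul_right C)
  rw [norm_smul, norm_pow]
  exact mul_le_mul_of_nonneg_left (hF k) (by positivity)

theorem hasDerivAt_tsum_pow_smul [CompleteSpace E] (hF : ∀ k, ‖F k‖ ≤ C) (hq : ‖q‖ < 1) :
    HasDerivAt (fun x => ∑' k, x ^ k • F k) (∑' k : ℕ, q ^ k • (((k : 𝕜) + 1) • F (k + 1))) q := by
  obtain ⟨r, hqr, hr⟩ := exists_between hq
  have hr0 : 0 ≤ r := (norm_nonneg q).trans hqr.le
  have hbound : ∀ (k : ℕ) (y : 𝕜), y ∈ Metric.ball 0 r →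
      ‖((k : 𝕜) * y ^ (k - 1)) • F k‖ ≤ C * ((k : ℝ) * r ^ (k - 1)) := by
    intro k y hy
    rw [mem_ball_zero_iff] at hy
    rw [norm_smul, norm_mul, norm_pow, RCLike.norm_natCast, mul_comm C]
    exact mul_le_mul (by gcongr) (hF k) (norm_nonneg _) (by positivity)
  have hsum := (summable_nat_mul_pow_sub_one (abs_lt.2 ⟨by linarith, hr⟩ : |r| < 1)).mul_left C
  have hderiv := hasDerivAt_tsum_of_isPreconnected (g := fun k x => x ^ k • F k) hsum
    Metric.isOpen_ball (convex_ball 0 r).isPreconnected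
    (fun k y _ => (hasDerivAt_pow k y).smul_const (F k)) hbound (mem_ball_zero_iff.2 hqr)
    (summable_norm_pow_smul_of_norm_le hF hq).of_norm (mem_ball_zero_iff.2 hqr)
  have hsummable : Summable fun k : ℕ => ((k : 𝕜) * q ^ (k - 1)) • F k :=
    .of_norm_bounded hsum fun k => hbound k q (mem_ball_zero_iff.2 hqr)
  convert hderiv using 1
  rw [hsummable.tsum_eq_zero_add]
  simp [smul_smul, mul_comm]

end PowerSeries

theorem norm_one_sub_exp_neg_lt_one {x : ℝ} (hx : 0 ≤ x) : ‖1 - Real.exp (-x)‖ < 1 := by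
  rw [Real.norm_eq_abs, abs_lt]
  constructor <;> linarith [Real.exp_pos (-x), Real.exp_le_one_iff.2 (neg_nonpos.2 hx)]

section Wild

variable {E : Type*} [NormedAddCommGroup E] [NormedSpace ℝ E] {μ : ℝ} {F : ℕ → E}

theorem norm_wild_le_one {P : E →ₗ[ℝ] E →ₗ[ℝ] E} (hμ : 0 < μ)
    (hP : ∀ f g : E, ‖P f g‖ ≤ μ * ‖f‖ * ‖g‖) (hF0 : ‖F 0‖ ≤ 1)
    (hFrec : ∀ k : ℕ, F (k + 1) =
      (1 / ((k : ℝ) + 1)) • ∑ h ∈ range (k + 1), μ⁻¹ • P (F h) (F (k - h))) (k : ℕ) :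
    ‖F k‖ ≤ 1 := by
  induction k using Nat.strong_induction_on with
  | _ k ih =>
    cases k with
    | zero => exact hF0
    | succ k =>
      have hterm : ∀ h ∈ range (k + 1), ‖μ⁻¹ • P (F h) (F (k - h))‖ ≤ 1 := by
        intro h hh
        have hh : h < k + 1 := mem_range.1 hh
        rw [norm_smul, norm_inv, Real.norm_of_nonneg hμ.le]
        calc μ⁻¹ * ‖P (F h) (F (k - h))‖ ≤ μ⁻¹ * (μ * 1 * 1) := by
              gcongr
              refine (hP _ _).trans ?_
              gcongr
              exacts [ih h hh, ih (k - h) (by omega)]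
          _ = 1 := by field_simp
      calc ‖F (k + 1)‖
          = (1 / ((k : ℝ) + 1)) * ‖∑ h ∈ range (k + 1), μ⁻¹ • P (F h) (F (k - h))‖ := by
            rw [hFrec, norm_smul, Real.norm_of_nonneg (by positivity)]
        _ ≤ (1 / ((k : ℝ) + 1)) * ∑ _h ∈ range (k + 1), (1 : ℝ) := by
            gcongr
            exact norm_sum_le_of_le _ hterm
        _ = 1 := by
            rw [sum_const, card_range, nsmul_one]
            push_cast
            field_simp

variable [CompleteSpace E]

theorem hasDerivAt_wild_series (B : E →L[ℝ] E →L[ℝ] E) {C q : ℝ} (hF : ∀ k, ‖F k‖ ≤ C)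
    (hFrec : ∀ k : ℕ, F (k + 1) =
      (1 / ((k : ℝ) + 1)) • ∑ h ∈ range (k + 1), μ⁻¹ • B (F h) (F (k - h)))
    (hq : ‖q‖ < 1) :
    HasDerivAt (fun x => ∑' k, x ^ k • F k)
      (μ⁻¹ • B (∑' k, q ^ k • F k) (∑' k, q ^ k • F k)) q := by
  have hS := summable_norm_pow_smul_of_norm_le hF hq
  convert hasDerivAt_tsum_pow_smul hF hq using 1
  rw [← (B.hasSum_sum_range_of_summable_norm hS hS).tsum_eq, ← tsum_const_smul'']
  refine tsum_congr fun n => ?_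
  rw [hFrec n, smul_smul ((n : ℝ) + 1), mul_one_div_cancel (by positivity), one_smul,
    smul_sum, smul_sum]
  refine sum_congr rfl fun k hk => ?_
  simp only [map_smul, FunLike.coe_smul, Pi.smul_apply, smul_smul, ← pow_add,
    Nat.add_sub_cancel' (mem_range_succ_iff.1 hk), mul_comm]

end Wild

theorem hasDerivAt_relaxation_of_quadratic {E : Type*} [NormedAddCommGroup E] [NormedSpace ℝ E]
    (P : E →ₗ[ℝ] E →ₗ[ℝ] E) {μ ε t : ℝ} {w : ℝ → ℝ} {S : ℝ → E} (hμ : μ ≠ 0)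
    (hw : HasDerivAt w (-(μ / ε) * w t) t)
    (hS : HasDerivAt S (μ⁻¹ • P (S (1 - w t)) (S (1 - w t))) (1 - w t)) :
    HasDerivAt (fun s => w s • S (1 - w s))
      ((1 / ε) • (P (w t • S (1 - w t)) (w t • S (1 - w t)) - μ • (w t • S (1 - w t)))) t := by
  refine (hw.smul (hS.scomp t (hw.const_sub 1))).congr_deriv ?_
  simp only [Function.comp_apply, map_smul, LinearMap.smul_apply, smul_smul, smul_sub]
  match_scalars <;> field_simp

/-- the Wild expansion `f(t) = (1-τ)∑ τ^k f_k`, `τ = 1 - e^{-μt/ε}`,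
converges absolutely, matches the initial data, and solves
`f' = (1/ε)(P(f,f) - μ f)` for `t > 0`. -/
theorem wild_expansion_solves_relaxation_equation
    {E : Type*} [NormedAddCommGroup E] [NormedSpace ℝ E] [CompleteSpace E]
    (μ ε : ℝ) (hμ : 0 < μ) (hε : 0 < ε)
    (P : E →ₗ[ℝ] E →ₗ[ℝ] E) (hP : ∀ f g : E, ‖P f g‖ ≤ μ * ‖f‖ * ‖g‖)
    (f₀ : E) (hf₀ : ‖f₀‖ ≤ 1)
    (F : ℕ → E) (hF0 : F 0 = f₀)
    (hFrec : ∀ k : ℕ, F (k + 1) =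
      (1 / ((k : ℝ) + 1)) • ∑ h ∈ Finset.range (k + 1), μ⁻¹ • P (F h) (F (k - h)))
    (τ : ℝ → ℝ) (hτ : ∀ t, τ t = 1 - Real.exp (-(μ * t / ε)))
    (f : ℝ → E) (hf : ∀ t, f t = (1 - τ t) • ∑' k : ℕ, τ t ^ k • F k) :
    (∀ t : ℝ, 0 ≤ t → Summable fun k : ℕ => ‖τ t ^ k • F k‖) ∧
    f 0 = f₀ ∧
    (∀ t : ℝ, 0 < t →
      HasDerivAt f ((1 / ε) • (P (f t) (f t) - μ • f t)) t) := by
  have hF : ∀ k, ‖F k‖ ≤ 1 := norm_wild_le_one hμ hP (hF0 ▸ hf₀) hFrec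
  have hτ_lt : ∀ t, 0 ≤ t → ‖τ t‖ < 1 := fun t ht =>
    hτ t ▸ norm_one_sub_exp_neg_lt_one (by positivity)
  refine ⟨fun t ht => summable_norm_pow_smul_of_norm_le hF (hτ_lt t ht), ?_, fun t ht => ?_⟩
  · rw [hf, hτ, tsum_eq_single 0 fun k hk => by simp [hk]]
    simp [hF0]
  · have hf_eq : f = fun s => Real.exp (-(μ * s / ε)) •
        ∑' k : ℕ, (1 - Real.exp (-(μ * s / ε))) ^ k • F k :=
      funext fun s => by rw [hf, hτ, sub_sub_cancel]
    have hexp : HasDerivAt (fun s => Real.exp (-(μ * s / ε)))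
        (-(μ / ε) * Real.exp (-(μ * t / ε))) t := by
      convert (hasDerivAt_mul_const (-(μ / ε)) (x := t)).exp using 1
      · ext s
        ring_nf
      · ring_nf
    have hS := hasDerivAt_wild_series (P.mkContinuous₂ μ hP) hF hFrec (hτ t ▸ hτ_lt t ht.le)
    rw [hf_eq]
    exact hasDerivAt_relaxation_of_quadratic P hμ.ne' hexp hS
end

section
/- Consider the abstract exponential Runge–Kutta scheme with a μ-Lipschitz map 𝒫. Let f⁰, g⁰ ∈ E, and let (F⁽ⁱ⁾, f¹) and (G⁽ⁱ⁾, g¹) be the stages and updates produced by the scheme from f⁰ and g⁰ respectively, using the same coefficients c, A(λ), W(λ) and the same element M. Then ‖f¹ − g¹‖ ≤ R(λ) ‖f⁰ − g⁰‖. In particular, if R(λ) ≤ 1 then the scheme is contractive: ‖f¹ − g¹‖ ≤ ‖f⁰ − g⁰‖. -/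
/-!
Subtracting the two runs cancels every occurrence of `M`, and `μ⁻¹ • 𝒫` is `1`-Lipschitz, so the
stage errors `dᵢ = ‖F⁽ⁱ⁾ - G⁽ⁱ⁾‖` satisfy the componentwise inequality `d ≤ δ Ē ē + λ Ā d`, where
`δ = ‖f⁰ - g⁰‖`. Since `λ Ā` is nonnegative and strictly lower triangular, hence nilpotent,
iterating this inequality `ν` times gives `d ≤ δ ∑_{k<ν} λᵏ Āᵏ Ē ē`, and the update satisfies
`‖f¹ - g¹‖ ≤ e^{-λ} δ + λ w̄ᵀ d ≤ R(λ) δ`.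
-/

open Matrix Finset

namespace Matrix

variable {R : Type*} [Semiring R]

lemma pow_apply_eq_zero_of_lt_add {n : ℕ} {N : Matrix (Fin n) (Fin n) R}
    (hN : ∀ i j, i ≤ j → N i j = 0) (k : ℕ) {i j : Fin n} (hij : (i : ℕ) < j + k) :
    (N ^ k) i j = 0 := by
  induction k generalizing i with
  | zero => exact one_apply_ne (by rintro rfl; omega)
  | succ k ih =>
    rw [pow_succ', mul_apply]
    refine sum_eq_zero fun l _ => ?_
    rcases le_or_gt i l with hil | hli
    · rw [hN i l hil, zero_mul]
    · rw [ih (by omega), mul_zero]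

lemma pow_eq_zero_of_strictly_lower_triangular {n : ℕ} {N : Matrix (Fin n) (Fin n) R}
    (hN : ∀ i j, i ≤ j → N i j = 0) : N ^ n = 0 := by
  ext i j
  exact pow_apply_eq_zero_of_lt_add hN n (by omega)

lemma mulVec_apply_eq_sum_Iio_of_strictly_lower_triangular {n : ℕ}
    {N : Matrix (Fin n) (Fin n) R} (hN : ∀ i j, i ≤ j → N i j = 0) (x : Fin n → R)
    (i : Fin n) :
    (N *ᵥ x) i = ∑ j ∈ Iio i, N i j * x j := by
  refine (sum_subset (subset_univ (Iio i)) fun j _ hj => ?_).symm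
  simp [hN i j (not_lt.mp (by simpa using hj))]

variable [PartialOrder R] [IsOrderedRing R] {n : Type*} [Fintype n]

lemma mulVec_le_mulVec_of_nonneg {m : Type*} {N : Matrix m n R} (hN : ∀ i j, 0 ≤ N i j)
    {x y : n → R} (hxy : x ≤ y) : N *ᵥ x ≤ N *ᵥ y :=
  fun i => dotProduct_le_dotProduct_of_nonneg_left hxy (hN i)

lemma le_sum_pow_mulVec_add_pow_mulVec [DecidableEq n] {N : Matrix n n R}
    (hN : ∀ i j, 0 ≤ N i j) {x b : n → R} (h : x ≤ b + N *ᵥ x) (k : ℕ) :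
    x ≤ ∑ l ∈ range k, N ^ l *ᵥ b + N ^ k *ᵥ x := by
  induction k with
  | zero => simp
  | succ k ih =>
    calc x ≤ b + N *ᵥ x := h
      _ ≤ b + N *ᵥ (∑ l ∈ range k, N ^ l *ᵥ b + N ^ k *ᵥ x) := by
        gcongr
        exact mulVec_le_mulVec_of_nonneg hN ih
      _ = ∑ l ∈ range (k + 1), N ^ l *ᵥ b + N ^ (k + 1) *ᵥ x := by
        simp only [mulVec_add, mulVec_sum, mulVec_mulVec, ← pow_succ', sum_range_succ',
          pow_zero, one_mulVec]
        abel

lemma le_sum_pow_mulVec_of_le_add_mulVec {m : ℕ} {N : Matrix (Fin m) (Fin m) R}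
    (hN : ∀ i j, 0 ≤ N i j) (hN_lower : ∀ i j, i ≤ j → N i j = 0) {x b : Fin m → R}
    (h : x ≤ b + N *ᵥ x) : x ≤ ∑ k ∈ range m, N ^ k *ᵥ b := by
  simpa [pow_eq_zero_of_strictly_lower_triangular hN_lower] using
    le_sum_pow_mulVec_add_pow_mulVec hN h m

end Matrix

section Scheme

variable {E : Type*} [SeminormedAddCommGroup E] [NormedSpace ℝ E] {μ : ℝ} {P : E → E}

lemma norm_inv_smul_sub_inv_smul_le (hP : ∀ f g : E, ‖P f - P g‖ ≤ μ * ‖f - g‖) (f g : E) :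
    ‖μ⁻¹ • P f - μ⁻¹ • P g‖ ≤ ‖f - g‖ := by
  rw [← smul_sub, norm_smul, norm_inv, Real.norm_eq_abs]
  rcases eq_or_ne μ 0 with rfl | hμ
  · simp
  rw [inv_mul_le_iff₀ (abs_pos.mpr hμ)]
  exact (hP f g).trans (mul_le_mul_of_nonneg_right (le_abs_self μ) (norm_nonneg _))

lemma norm_sum_smul_sub_sum_smul_le (hP : ∀ f g : E, ‖P f - P g‖ ≤ μ * ‖f - g‖) (M : E)
    {ι : Type*} (s : Finset ι) (a : ι → ℝ) (u v : ι → E) :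
    ‖∑ j ∈ s, a j • (μ⁻¹ • P (u j) - M) - ∑ j ∈ s, a j • (μ⁻¹ • P (v j) - M)‖ ≤
      ∑ j ∈ s, |a j| * ‖u j - v j‖ := by
  rw [← sum_sub_distrib]
  refine (norm_sum_le _ _).trans (sum_le_sum fun j _ => ?_)
  rw [← smul_sub, sub_sub_sub_cancel_right, norm_smul, Real.norm_eq_abs]
  gcongr
  exact norm_inv_smul_sub_inv_smul_le hP _ _

lemma norm_expRK_stage_sub_le (hP : ∀ f g : E, ‖P f - P g‖ ≤ μ * ‖f - g‖) (M : E)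
    {e lam : ℝ} (he : 0 ≤ e) (hlam : 0 ≤ lam) (x y : E)
    {ι : Type*} (s : Finset ι) (a : ι → ℝ) (u v : ι → E) :
    ‖(e • x + lam • ∑ j ∈ s, a j • (μ⁻¹ • P (u j) - M) + (1 - e) • M)
      - (e • y + lam • ∑ j ∈ s, a j • (μ⁻¹ • P (v j) - M) + (1 - e) • M)‖ ≤
      e * ‖x - y‖ + lam * ∑ j ∈ s, |a j| * ‖u j - v j‖ := by
  rw [add_sub_add_right_eq_sub, add_sub_add_comm, ← smul_sub, ← smul_sub]
  refine (norm_add_le _ _).trans ?_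
  rw [norm_smul, norm_smul, Real.norm_of_nonneg he, Real.norm_of_nonneg hlam]
  gcongr
  exact norm_sum_smul_sub_sum_smul_le hP M s a u v

lemma expRK_stage_errors_le (hP : ∀ f g : E, ‖P f - P g‖ ≤ μ * ‖f - g‖) (M : E)
    {ν : ℕ} {lam : ℝ} (hlam : 0 ≤ lam) (c : Fin ν → ℝ) {A : Matrix (Fin ν) (Fin ν) ℝ}
    (hA : ∀ i j : Fin ν, i ≤ j → A i j = 0) {f0 g0 : E} {F G : Fin ν → E}
    (hF : ∀ i, F i = Real.exp (-(c i * lam)) • f0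
      + lam • ∑ j ∈ Iio i, A i j • (μ⁻¹ • P (F j) - M)
      + (1 - Real.exp (-(c i * lam))) • M)
    (hG : ∀ i, G i = Real.exp (-(c i * lam)) • g0
      + lam • ∑ j ∈ Iio i, A i j • (μ⁻¹ • P (G j) - M)
      + (1 - Real.exp (-(c i * lam))) • M) :
    (fun i => ‖F i - G i‖) ≤ ‖f0 - g0‖ • (fun i => Real.exp (-(c i * lam)))
      + (lam • A.map fun x => |x|) *ᵥ fun i => ‖F i - G i‖ := by
  have hAbs_lower : ∀ i j, i ≤ j → (A.map fun x => |x|) i j = 0 := fun i j hij => by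
    simp [hA i j hij]
  intro i
  have := norm_expRK_stage_sub_le hP M (Real.exp_nonneg (-(c i * lam))) hlam f0 g0
    (Iio i) (A i) F G
  rw [← hF i, ← hG i] at this
  refine this.trans_eq ?_
  simp [smul_mulVec, mulVec_apply_eq_sum_Iio_of_strictly_lower_triangular hAbs_lower, mul_comm]

end Scheme

theorem expRK_contractivity_general
    {E : Type*} [NormedAddCommGroup E] [NormedSpace ℝ E]
    (ν : ℕ) (lam : ℝ) (hlam : 0 ≤ lam)
    (c : Fin ν → ℝ)
    (A : Matrix (Fin ν) (Fin ν) ℝ) (hA : ∀ i j : Fin ν, i ≤ j → A i j = 0)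
    (W : Fin ν → ℝ) (μ : ℝ) (M : E)
    (P : E → E) (hP : ∀ f g : E, ‖P f - P g‖ ≤ μ * ‖f - g‖)
    (f0 g0 : E) (F G : Fin ν → E) (f1 g1 : E)
    (hF : ∀ i, F i = Real.exp (-(c i * lam)) • f0
      + lam • ∑ j ∈ Finset.Iio i, A i j • (μ⁻¹ • P (F j) - M)
      + (1 - Real.exp (-(c i * lam))) • M)
    (hG : ∀ i, G i = Real.exp (-(c i * lam)) • g0
      + lam • ∑ j ∈ Finset.Iio i, A i j • (μ⁻¹ • P (G j) - M)
      + (1 - Real.exp (-(c i * lam))) • M)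
    (hf1 : f1 = Real.exp (-lam) • f0
      + lam • ∑ i, W i • (μ⁻¹ • P (F i) - M) + (1 - Real.exp (-lam)) • M)
    (hg1 : g1 = Real.exp (-lam) • g0
      + lam • ∑ i, W i • (μ⁻¹ • P (G i) - M) + (1 - Real.exp (-lam)) • M) :
    ‖f1 - g1‖ ≤
      (Real.exp (-lam) + ∑ k ∈ Finset.range ν, lam ^ (k + 1) *
        ((fun i => |W i|) ⬝ᵥ (((A.map fun x => |x|) ^ k *
          Matrix.diagonal fun i => Real.exp (-(c i * lam))) *ᵥ fun _ => 1))) * ‖f0 - g0‖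
    ∧ ((Real.exp (-lam) + ∑ k ∈ Finset.range ν, lam ^ (k + 1) *
        ((fun i => |W i|) ⬝ᵥ (((A.map fun x => |x|) ^ k *
          Matrix.diagonal fun i => Real.exp (-(c i * lam))) *ᵥ fun _ => 1))) ≤ 1 →
        ‖f1 - g1‖ ≤ ‖f0 - g0‖) := by
  set e : Fin ν → ℝ := fun i => Real.exp (-(c i * lam))
  set Rlam := Real.exp (-lam) + ∑ k ∈ range ν, lam ^ (k + 1) *
    ((fun i => |W i|) ⬝ᵥ (((A.map fun x => |x|) ^ k * diagonal e) *ᵥ fun _ => 1))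
  set δ := ‖f0 - g0‖
  set Abs := A.map fun x => |x|
  set d : Fin ν → ℝ := fun i => ‖F i - G i‖
  have hd : d ≤ ∑ k ∈ range ν, (lam • Abs) ^ k *ᵥ (δ • e) :=
    le_sum_pow_mulVec_of_le_add_mulVec (fun i j => mul_nonneg hlam (abs_nonneg _))
      (fun i j hij => by simp [hA i j hij]) (expRK_stage_errors_le hP M hlam c hA hF hG)
  have hmain : ‖f1 - g1‖ ≤ Rlam * δ := calc
    ‖f1 - g1‖ ≤ Real.exp (-lam) * δ + lam * ((fun i => |W i|) ⬝ᵥ d) := by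
      have := norm_expRK_stage_sub_le hP M (Real.exp_nonneg (-lam)) hlam f0 g0 univ W F G
      rwa [← hf1, ← hg1] at this
    _ ≤ Real.exp (-lam) * δ
        + lam * ((fun i => |W i|) ⬝ᵥ ∑ k ∈ range ν, (lam • Abs) ^ k *ᵥ (δ • e)) := by
      gcongr
      exact dotProduct_le_dotProduct_of_nonneg_left hd fun i => abs_nonneg _
    _ = Rlam * δ := by
      have hdiag : (diagonal e *ᵥ fun _ => 1) = e := by ext; simp [mulVec_diagonal]
      simp only [Rlam, smul_pow, smul_mulVec, mulVec_smul, ← mulVec_mulVec, hdiag,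
        dotProduct_sum, dotProduct_smul, smul_eq_mul, mul_sum, add_mul, sum_mul]
      congr 1
      refine sum_congr rfl fun k _ => ?_
      ring
  exact ⟨hmain, fun h => hmain.trans (mul_le_of_le_one_left (norm_nonneg _) h)⟩

/-- contractivity of the abstract exponential Runge–Kutta scheme,
`‖f¹ - g¹‖ ≤ R(λ) ‖f⁰ - g⁰‖`, with
`R(λ) = e^{-λ} + ∑_{k=0}^{ν-1} λ^{k+1} w̄ᵀ Ā^k Ē ē`. -/
theorem expRK_contractivity
    {E : Type*} [NormedAddCommGroup E] [NormedSpace ℝ E]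
    (ν : ℕ) (hν : 1 ≤ ν) (lam : ℝ) (hlam : 0 ≤ lam)
    (c : Fin ν → ℝ) (hc : ∀ i, 0 ≤ c i)
    (A : Matrix (Fin ν) (Fin ν) ℝ) (hA : ∀ i j : Fin ν, i ≤ j → A i j = 0)
    (W : Fin ν → ℝ) (μ : ℝ) (hμ : 0 < μ) (M : E)
    (P : E → E) (hP : ∀ f g : E, ‖P f - P g‖ ≤ μ * ‖f - g‖)
    (f0 g0 : E) (F G : Fin ν → E) (f1 g1 : E)
    (hF : ∀ i, F i = Real.exp (-(c i * lam)) • f0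
      + lam • ∑ j ∈ Finset.Iio i, A i j • (μ⁻¹ • P (F j) - M)
      + (1 - Real.exp (-(c i * lam))) • M)
    (hG : ∀ i, G i = Real.exp (-(c i * lam)) • g0
      + lam • ∑ j ∈ Finset.Iio i, A i j • (μ⁻¹ • P (G j) - M)
      + (1 - Real.exp (-(c i * lam))) • M)
    (hf1 : f1 = Real.exp (-lam) • f0
      + lam • ∑ i, W i • (μ⁻¹ • P (F i) - M) + (1 - Real.exp (-lam)) • M)
    (hg1 : g1 = Real.exp (-lam) • g0
      + lam • ∑ i, W i • (μ⁻¹ • P (G i) - M) + (1 - Real.exp (-lam)) • M) :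
    ‖f1 - g1‖ ≤
      (Real.exp (-lam) + ∑ k ∈ Finset.range ν, lam ^ (k + 1) *
        ((fun i => |W i|) ⬝ᵥ (((A.map fun x => |x|) ^ k *
          Matrix.diagonal fun i => Real.exp (-(c i * lam))) *ᵥ fun _ => 1))) * ‖f0 - g0‖
    ∧ ((Real.exp (-lam) + ∑ k ∈ Finset.range ν, lam ^ (k + 1) *
        ((fun i => |W i|) ⬝ᵥ (((A.map fun x => |x|) ^ k *
          Matrix.diagonal fun i => Real.exp (-(c i * lam))) *ᵥ fun _ => 1))) ≤ 1 →
        ‖f1 - g1‖ ≤ ‖f0 - g0‖) :=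
  expRK_contractivity_general ν lam hlam c A hA W μ M P hP f0 g0 F G f1 g1 hF hG hf1 hg1
end

section
/- Let ν ≥ 1, let (a_{ij}) be a real ν×ν strictly lower triangular matrix, w ∈ ℝ^ν, c ∈ ℝ^ν, and λ ∈ ℝ. Define the integrating factor coefficients A(λ)_{ij} = a_{ij} e^{−(c_i − c_j)λ} for j < i (and 0 otherwise), W_i(λ) = w_i e^{−(1 − c_i)λ}, and E(λ) = diag(e^{−c_1λ}, …, e^{−c_νλ}). Then for every integer k ≥ 0, W(λ)ᵀ A(λ)^k E(λ) ē = e^{−λ} wᵀ a^k ē, where ē is the all-ones vector. In particular, if all a_{ij} ≥ 0 and all w_i ≥ 0, the stability function of the IF method equals R(λ) = e^{−λ}(1 + ∑_{k=0}^{ν−1} λ^{k+1} wᵀ a^k ē). -/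
/-!
The diagonal matrix `E(λ) = diag(e^{-c_i λ})` conjugates the Runge–Kutta matrix `a` into the
integrating factor matrix, `E a = A E`, since `e^{-c_i λ} a_{ij} = a_{ij} e^{-(c_i - c_j)λ} e^{-c_j λ}`.
Hence `A^k E = E a^k`, and `Wᵀ E = e^{-λ} wᵀ` collapses the remaining exponentials. For
nonnegative `a` and `w` the absolute values in the stability function change nothing.
-/

open Matrix

section IntegratingFactor

variable {ι : Type*} [LinearOrder ι] {a A : Matrix ι ι ℝ} {w W c : ι → ℝ} {lam : ℝ}

theorem semiconjBy_diagonal_exp_of_integratingFactor [Fintype ι] (ha : ∀ i j, i ≤ j → a i j = 0)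
    (hA : ∀ i j, A i j = if j < i then a i j * Real.exp (-(c i - c j) * lam) else 0) :
    SemiconjBy (diagonal fun i => Real.exp (-(c i * lam))) a A := by
  ext i j
  rw [diagonal_mul, mul_diagonal, hA]
  split_ifs with hji
  · rw [mul_assoc, ← Real.exp_add]
    ring_nf
  · rw [ha i j (not_lt.mp hji), mul_zero, zero_mul]

theorem vecMul_diagonal_exp_of_integratingFactor [Fintype ι]
    (hW : ∀ i, W i = w i * Real.exp (-(1 - c i) * lam)) :
    W ᵥ* diagonal (fun i => Real.exp (-(c i * lam))) = Real.exp (-lam) • w := by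
  ext i
  rw [vecMul_diagonal, hW, Pi.smul_apply, smul_eq_mul, mul_assoc, ← Real.exp_add]
  ring_nf

theorem map_abs_of_integratingFactor (hA_nonneg : ∀ i j, 0 ≤ a i j)
    (hA : ∀ i j, A i j = if j < i then a i j * Real.exp (-(c i - c j) * lam) else 0) :
    A.map (|·|) = A := by
  ext i j
  rw [map_apply, abs_eq_self, hA]
  split_ifs
  · exact mul_nonneg (hA_nonneg i j) (Real.exp_pos _).le
  · exact le_rfl

end IntegratingFactor

theorem integrating_factor_stability_function_general
    (ν : ℕ)
    (a : Matrix (Fin ν) (Fin ν) ℝ) (ha : ∀ i j : Fin ν, i ≤ j → a i j = 0)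
    (w c : Fin ν → ℝ) (lam : ℝ)
    (A : Matrix (Fin ν) (Fin ν) ℝ)
    (hA : ∀ i j : Fin ν, A i j = if j < i then a i j * Real.exp (-(c i - c j) * lam) else 0)
    (Wv : Fin ν → ℝ) (hW : ∀ i, Wv i = w i * Real.exp (-(1 - c i) * lam))
    (Ed : Matrix (Fin ν) (Fin ν) ℝ)
    (hE : Ed = Matrix.diagonal fun i => Real.exp (-(c i * lam))) :
    (∀ k : ℕ, Wv ⬝ᵥ ((A ^ k * Ed) *ᵥ fun _ => 1) =
      Real.exp (-lam) * (w ⬝ᵥ (a ^ k *ᵥ fun _ => 1))) ∧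
    ((∀ i j, 0 ≤ a i j) → (∀ i, 0 ≤ w i) →
      Real.exp (-lam) + ∑ k ∈ Finset.range ν, lam ^ (k + 1) *
        ((fun i => |Wv i|) ⬝ᵥ (((A.map fun x => |x|) ^ k * Ed) *ᵥ fun _ => 1))
      = Real.exp (-lam) *
        (1 + ∑ k ∈ Finset.range ν, lam ^ (k + 1) * (w ⬝ᵥ (a ^ k *ᵥ fun _ => 1)))) := by
  have hconj := semiconjBy_diagonal_exp_of_integratingFactor ha hA
  have hweights := vecMul_diagonal_exp_of_integratingFactor hW
  have hpow (k : ℕ) : Wv ⬝ᵥ ((A ^ k * Ed) *ᵥ fun _ => 1) =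
      Real.exp (-lam) * (w ⬝ᵥ (a ^ k *ᵥ fun _ => 1)) := by
    rw [hE, ← (hconj.pow_right k).eq, ← mulVec_mulVec, dotProduct_mulVec, hweights,
      smul_dotProduct, smul_eq_mul]
  refine ⟨hpow, fun ha_nonneg hw_nonneg => ?_⟩
  have hWabs : (fun i => |Wv i|) = Wv := funext fun i => abs_of_nonneg <| by
    rw [hW]; exact mul_nonneg (hw_nonneg i) (Real.exp_pos _).le
  rw [map_abs_of_integratingFactor ha_nonneg hA, hWabs, mul_add, mul_one, Finset.mul_sum]
  simp_rw [hpow]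
  congr 1
  exact Finset.sum_congr rfl fun k _ => by ring

/-- for integrating factor coefficients
`A(λ)_{ij} = a_{ij} e^{-(c_i - c_j)λ}` (j < i), `W_i(λ) = w_i e^{-(1-c_i)λ}`,
`E(λ) = diag(e^{-c_iλ})`, one has `W(λ)ᵀ A(λ)^k E(λ) ē = e^{-λ} wᵀ a^k ē`;
in particular for nonnegative `a`, `w` the stability function equals
`R(λ) = e^{-λ}(1 + ∑_{k<ν} λ^{k+1} wᵀ a^k ē)`. -/
theorem integrating_factor_stability_function
    (ν : ℕ) (hν : 1 ≤ ν)
    (a : Matrix (Fin ν) (Fin ν) ℝ) (ha : ∀ i j : Fin ν, i ≤ j → a i j = 0)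
    (w c : Fin ν → ℝ) (lam : ℝ)
    (A : Matrix (Fin ν) (Fin ν) ℝ)
    (hA : ∀ i j : Fin ν, A i j = if j < i then a i j * Real.exp (-(c i - c j) * lam) else 0)
    (Wv : Fin ν → ℝ) (hW : ∀ i, Wv i = w i * Real.exp (-(1 - c i) * lam))
    (Ed : Matrix (Fin ν) (Fin ν) ℝ)
    (hE : Ed = Matrix.diagonal fun i => Real.exp (-(c i * lam))) :
    (∀ k : ℕ, Wv ⬝ᵥ ((A ^ k * Ed) *ᵥ fun _ => 1) =
      Real.exp (-lam) * (w ⬝ᵥ (a ^ k *ᵥ fun _ => 1))) ∧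
    ((∀ i j, 0 ≤ a i j) → (∀ i, 0 ≤ w i) →
      Real.exp (-lam) + ∑ k ∈ Finset.range ν, lam ^ (k + 1) *
        ((fun i => |Wv i|) ⬝ᵥ (((A.map fun x => |x|) ^ k * Ed) *ᵥ fun _ => 1))
      = Real.exp (-lam) *
        (1 + ∑ k ∈ Finset.range ν, lam ^ (k + 1) * (w ⬝ᵥ (a ^ k *ᵥ fun _ => 1)))) :=
  integrating_factor_stability_function_general ν a ha w c lam A hA Wv hW Ed hE
end

section
/- Consider the abstract exponential Runge–Kutta scheme with integrating factor coefficients A_{ij}(λ) = a_{ij} e^{−(c_i − c_j)λ} (j < i) and W_i(λ) = w_i e^{−(1 − c_i)λ}, where a_{ij} ≥ 0, w_i ≥ 0, and 0 ≤ c_1 ≤ c_2 ≤ … ≤ c_ν ≤ 1. Assume 𝒫 is μ-Lipschitz and 𝒫(M) = μM. Then for every fixed f⁰ ∈ E, the update f¹ = f¹(λ) converges to M in E as λ → ∞. -/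
/-!
Multiplying the error of the `i`-th stage by `exp (c i * λ)` removes every exponential
from the integrating-factor scheme, and since `𝒫 / μ` is 1-Lipschitz with fixed point
`M`, the rescaled errors obey a strictly lower triangular recursion
`x i ≤ ‖f⁰ - M‖ + λ ∑_{j<i} |a i j| x j`. A discrete Grönwall argument bounds them by a
polynomial in `λ`; the same recursion for the update, rescaled by `exp λ`, leaves
`‖f¹(λ) - M‖ ≤ poly(λ) * exp (-λ) → 0`.
-/

open Filter Topology Asymptotics Real Finset

section Gronwall

variable {ι : Type*} {b t K : ℝ}

theorem add_mul_sum_le_mul_one_add_mul_pow_succ (s : Finset ι) (α x : ι → ℝ) (n : ℕ)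
    (hb : 0 ≤ b) (ht : 0 ≤ t) (hα : ∀ j ∈ s, 0 ≤ α j) (hK : ∑ j ∈ s, α j ≤ K)
    (hx : ∀ j ∈ s, x j ≤ b * (1 + K * t) ^ n) :
    b + t * ∑ j ∈ s, α j * x j ≤ b * (1 + K * t) ^ (n + 1) := by
  have hK0 : 0 ≤ K := (sum_nonneg hα).trans hK
  have hr : 1 ≤ (1 + K * t) ^ n := one_le_pow₀ (by nlinarith)
  have hsum : ∑ j ∈ s, α j * x j ≤ K * (b * (1 + K * t) ^ n) :=
    calc ∑ j ∈ s, α j * x j ≤ ∑ j ∈ s, α j * (b * (1 + K * t) ^ n) :=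
          sum_le_sum fun j hj => mul_le_mul_of_nonneg_left (hx j hj) (hα j hj)
      _ = (∑ j ∈ s, α j) * (b * (1 + K * t) ^ n) := (sum_mul ..).symm
      _ ≤ K * (b * (1 + K * t) ^ n) := by gcongr
  calc b + t * ∑ j ∈ s, α j * x j
        ≤ b * (1 + K * t) ^ n + t * (K * (b * (1 + K * t) ^ n)) := by gcongr; nlinarith
    _ = b * (1 + K * t) ^ (n + 1) := by ring

theorem le_mul_one_add_mul_pow_of_le_add_mul_sum {ν : ℕ} (α : Fin ν → Fin ν → ℝ)
    (x : Fin ν → ℝ) (hb : 0 ≤ b) (ht : 0 ≤ t) (hα : ∀ i j, 0 ≤ α i j)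
    (hK : ∀ i, ∑ j ∈ Iio i, α i j ≤ K) (hx : ∀ i, x i ≤ b + t * ∑ j ∈ Iio i, α i j * x j)
    (i : Fin ν) : x i ≤ b * (1 + K * t) ^ ν := by
  suffices h : ∀ n : ℕ, ∀ i : Fin ν, (i : ℕ) < n → x i ≤ b * (1 + K * t) ^ n from h ν i i.isLt
  intro n
  induction n with
  | zero => intro i hi; omega
  | succ n ih =>
    intro i hi
    refine (hx i).trans (add_mul_sum_le_mul_one_add_mul_pow_succ _ _ _ n hb ht
      (fun j _ => hα i j) (hK i) fun j hj => ih j ?_)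
    have := Fin.lt_def.mp (mem_Iio.mp hj)
    omega

end Gronwall

theorem sum_abs_le_sum_sum_abs {ι κ : Type*} [Fintype ι] [Fintype κ] (a : ι → κ → ℝ) (i : ι)
    (s : Finset κ) : ∑ j ∈ s, |a i j| ≤ ∑ i, ∑ j, |a i j| :=
  calc ∑ j ∈ s, |a i j| ≤ ∑ j, |a i j| :=
        sum_le_sum_of_subset_of_nonneg (subset_univ _) fun j _ _ => abs_nonneg _
    _ ≤ ∑ i, ∑ j, |a i j| :=
        single_le_sum (f := fun i => ∑ j, |a i j|) (fun i _ => by positivity) (mem_univ i)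

theorem tendsto_one_add_mul_pow_mul_exp_neg_atTop (K : ℝ) (n : ℕ) :
    Tendsto (fun t => (1 + K * t) ^ n * exp (-t)) atTop (𝓝 0) := by
  have hlin : (fun t : ℝ => 1 + K * t) =O[atTop] id :=
    (isLittleO_const_id_atTop 1).isBigO.add (isBigO_const_mul_self K id atTop)
  have := ((hlin.pow n).trans_isLittleO isLittleO_pow_exp_atTop).tendsto_div_nhds_zero
  simpa [div_eq_mul_inv, ← exp_neg] using this

section NormedSpace

variable {E : Type*} [NormedAddCommGroup E] [NormedSpace ℝ E]

theorem norm_inv_smul_sub_le_of_lipschitz {P : E → E} {μ : ℝ} (hμ : 0 < μ)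
    (hP : ∀ f g : E, ‖P f - P g‖ ≤ μ * ‖f - g‖) {M : E} (hPM : P M = μ • M) (g : E) :
    ‖μ⁻¹ • P g - M‖ ≤ ‖g - M‖ := by
  have h : μ⁻¹ • P g - M = μ⁻¹ • (P g - P M) := by
    rw [hPM, smul_sub, smul_smul, inv_mul_cancel₀ hμ.ne', one_smul]
  rw [h, norm_smul, Real.norm_of_nonneg (inv_pos.mpr hμ).le]
  calc μ⁻¹ * ‖P g - P M‖ ≤ μ⁻¹ * (μ * ‖g - M‖) := by gcongr; exact hP g M
    _ = ‖g - M‖ := by field_simp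

theorem exp_mul_norm_sub_le_of_integratingFactor_eq {ι : Type*} (s : Finset ι)
    (α c y : ι → ℝ) (v : ι → E) {Y u M : E} {d t : ℝ} (ht : 0 ≤ t)
    (hv : ∀ j ∈ s, ‖v j - M‖ ≤ y j)
    (hY : Y = exp (-(d * t)) • u + t • ∑ j ∈ s, (α j * exp (-(d - c j) * t)) • (v j - M)
      + (1 - exp (-(d * t))) • M) :
    exp (d * t) * ‖Y - M‖ ≤ ‖u - M‖ + t * ∑ j ∈ s, |α j| * (exp (c j * t) * y j) := by
  have hscale : exp (d * t) • (Y - M)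
      = (u - M) + t • ∑ j ∈ s, (α j * exp (c j * t)) • (v j - M) := by
    have hexp : ∀ j, exp (d * t) * exp (-(d - c j) * t) = exp (c j * t) := fun j => by
      rw [← exp_add]; ring_nf
    have hd : exp (d * t) * exp (-(d * t)) = 1 := by
      rw [← exp_add, add_neg_cancel, exp_zero]
    rw [hY, smul_sub, smul_add, smul_add, smul_smul, smul_comm _ t, smul_sum]
    simp only [smul_smul, mul_left_comm _ (α _), hexp]
    linear_combination (norm := module) hd • (u - M)
  rw [← Real.norm_of_nonneg (exp_pos (d * t)).le, ← norm_smul, hscale]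
  refine (norm_add_le _ _).trans ?_
  rw [norm_smul, Real.norm_of_nonneg ht]
  gcongr
  refine (norm_sum_le _ _).trans (sum_le_sum fun j hj => ?_)
  rw [norm_smul, Real.norm_eq_abs, abs_mul, abs_exp, mul_assoc]
  gcongr
  exact hv j hj

end NormedSpace

theorem IF_scheme_asymptotic_preservation_general
    {E : Type*} [NormedAddCommGroup E] [NormedSpace ℝ E]
    (ν : ℕ)
    (a : Matrix (Fin ν) (Fin ν) ℝ)
    (w : Fin ν → ℝ)
    (c : Fin ν → ℝ)
    (μ : ℝ) (hμ : 0 < μ) (M : E)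
    (P : E → E) (hP : ∀ f g : E, ‖P f - P g‖ ≤ μ * ‖f - g‖)
    (hPM : P M = μ • M)
    (f0 : E) (F : ℝ → Fin ν → E) (f1 : ℝ → E)
    (hF : ∀ lam : ℝ, 0 ≤ lam → ∀ i, F lam i = Real.exp (-(c i * lam)) • f0
      + lam • ∑ j ∈ Finset.Iio i,
          (a i j * Real.exp (-(c i - c j) * lam)) • (μ⁻¹ • P (F lam j) - M)
      + (1 - Real.exp (-(c i * lam))) • M)
    (hf1 : ∀ lam : ℝ, 0 ≤ lam → f1 lam = Real.exp (-lam) • f0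
      + lam • ∑ i, (w i * Real.exp (-(1 - c i) * lam)) • (μ⁻¹ • P (F lam i) - M)
      + (1 - Real.exp (-lam)) • M) :
    Tendsto f1 atTop (nhds M) := by
  set b := ‖f0 - M‖
  set K := ∑ i, ∑ j, |a i j| + ∑ i, |w i|
  have hKa (i : Fin ν) : ∑ j ∈ Iio i, |a i j| ≤ K :=
    (sum_abs_le_sum_sum_abs a i _).trans (le_add_of_nonneg_right (by positivity))
  have hKw : ∑ i, |w i| ≤ K := le_add_of_nonneg_left (by positivity)
  have hrelax (g : E) := norm_inv_smul_sub_le_of_lipschitz hμ hP hPM g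
  have hbound (t : ℝ) (ht : 0 ≤ t) :
      ‖f1 t - M‖ ≤ b * ((1 + K * t) ^ (ν + 1) * exp (-t)) := by
    set x : Fin ν → ℝ := fun i => exp (c i * t) * ‖F t i - M‖
    have hstage (i : Fin ν) : x i ≤ b + t * ∑ j ∈ Iio i, |a i j| * x j :=
      exp_mul_norm_sub_le_of_integratingFactor_eq _ _ _ _ _ ht (fun j _ => hrelax _) (hF t ht i)
    have hupdate : exp t * ‖f1 t - M‖ ≤ b + t * ∑ i, |w i| * x i := by
      simpa only [one_mul] using exp_mul_norm_sub_le_of_integratingFactor_eq (d := 1) univ w c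
        (fun i => ‖F t i - M‖) _ ht (fun i _ => hrelax _) (by simpa only [one_mul] using hf1 t ht)
    have hx := le_mul_one_add_mul_pow_of_le_add_mul_sum _ x (norm_nonneg _) ht
      (fun _ _ => abs_nonneg _) hKa hstage
    have := hupdate.trans (add_mul_sum_le_mul_one_add_mul_pow_succ univ _ x ν (norm_nonneg _) ht
      (fun i _ => abs_nonneg _) hKw fun i _ => hx i)
    rw [exp_neg, ← mul_assoc, ← div_eq_mul_inv, le_div_iff₀ (exp_pos t)]
    linarith
  rw [tendsto_iff_norm_sub_tendsto_zero]
  refine squeeze_zero' (Eventually.of_forall fun t => norm_nonneg _)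
    ((eventually_ge_atTop 0).mono hbound) ?_
  simpa using (tendsto_one_add_mul_pow_mul_exp_neg_atTop K (ν + 1)).const_mul b

/-- asymptotic preservation of the integrating factor exponential
Runge–Kutta scheme with nonnegative underlying coefficients and ordered nodes
`0 ≤ c_1 ≤ … ≤ c_ν ≤ 1`: the update `f¹(λ)` converges to `M` as `λ → ∞`. -/
theorem IF_scheme_asymptotic_preservation
    {E : Type*} [NormedAddCommGroup E] [NormedSpace ℝ E]
    (ν : ℕ) (hν : 1 ≤ ν)
    (a : Matrix (Fin ν) (Fin ν) ℝ) (ha0 : ∀ i j : Fin ν, i ≤ j → a i j = 0)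
    (hann : ∀ i j, 0 ≤ a i j)
    (w : Fin ν → ℝ) (hw : ∀ i, 0 ≤ w i)
    (c : Fin ν → ℝ) (hc0 : ∀ i, 0 ≤ c i) (hc1 : ∀ i, c i ≤ 1) (hcmono : Monotone c)
    (μ : ℝ) (hμ : 0 < μ) (M : E)
    (P : E → E) (hP : ∀ f g : E, ‖P f - P g‖ ≤ μ * ‖f - g‖)
    (hPM : P M = μ • M)
    (f0 : E) (F : ℝ → Fin ν → E) (f1 : ℝ → E)
    (hF : ∀ lam : ℝ, 0 ≤ lam → ∀ i, F lam i = Real.exp (-(c i * lam)) • f0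
      + lam • ∑ j ∈ Finset.Iio i,
          (a i j * Real.exp (-(c i - c j) * lam)) • (μ⁻¹ • P (F lam j) - M)
      + (1 - Real.exp (-(c i * lam))) • M)
    (hf1 : ∀ lam : ℝ, 0 ≤ lam → f1 lam = Real.exp (-lam) • f0
      + lam • ∑ i, (w i * Real.exp (-(1 - c i) * lam)) • (μ⁻¹ • P (F lam i) - M)
      + (1 - Real.exp (-lam)) • M) :
    Tendsto f1 atTop (nhds M) :=
  IF_scheme_asymptotic_preservation_general ν a w c μ hμ M P hP hPM f0 F f1 hF hf1
end

section
/- Consider the abstract exponential Runge–Kutta scheme with integrating factor coefficients A_{ij}(λ) = a_{ij} e^{−(c_i − c_j)λ} (j < i) and W_i(λ) = w_i e^{−(1 − c_i)λ}, where a_{ij}, w_i are arbitrary real coefficients and the nodes satisfy the strict inequalities 0 = c_1 < c_2 < … < c_ν < 1. Assume 𝒫 is μ-Lipschitz and 𝒫(M) = μM. Then for every fixed f⁰ ∈ E, each stage F⁽ⁱ⁾(λ) with i ≥ 2 converges to M as λ → ∞, and the update f¹(λ) converges to M as λ → ∞. -/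
/-!
Multiplying the stage equation by the integrating factor `exp (c i * λ)` removes the stiff
exponentials. Since `G x = μ⁻¹ • P x - M` satisfies `‖G x‖ ≤ ‖x - M‖`, the weighted deviations
`u i = exp (c i * λ) * ‖F⁽ⁱ⁾ - M‖` obey `u i ≤ ‖f⁰ - M‖ + K λ ∑_{j<i} u j`, where `K` bounds all
`|a i j|` and `|w i|`. A discrete Gronwall argument then bounds them polynomially,
`u i ≤ ‖f⁰ - M‖ (1 + K λ) ^ i`, and the update obeys the same recursion with weight `exp λ`.
As `c i > 0` for `i ≥ 1`, the factor `exp (-c i * λ)` beats the polynomial.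
-/

open Filter Finset Real Asymptotics Topology

theorem tendsto_one_add_mul_pow_mul_exp_neg_atTop_nhds_zero (K : ℝ) (n : ℕ) {ε : ℝ}
    (hε : 0 < ε) :
    Tendsto (fun x => (1 + K * x) ^ n * exp (-(ε * x))) atTop (𝓝 0) := by
  have hlin : (fun x : ℝ => 1 + K * x) =O[atTop] fun x => x :=
    (isLittleO_const_id_atTop (1 : ℝ)).isBigO.add (isBigO_const_mul_self K _ _)
  have hexp := (hlin.pow n).trans_isLittleO (isLittleO_pow_exp_pos_mul_atTop n hε)
  refine hexp.tendsto_div_nhds_zero.congr fun x => ?_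
  rw [exp_neg, div_eq_mul_inv]

theorem tendsto_nhds_of_exp_mul_norm_sub_le {E : Type*} [SeminormedAddCommGroup E]
    {f : ℝ → E} {M : E} {ε B K : ℝ} {n : ℕ} (hε : 0 < ε)
    (h : ∀ lam, 0 ≤ lam → exp (ε * lam) * ‖f lam - M‖ ≤ B * (1 + K * lam) ^ n) :
    Tendsto f atTop (𝓝 M) := by
  rw [tendsto_iff_norm_sub_tendsto_zero]
  refine squeeze_zero' (Eventually.of_forall fun _ => norm_nonneg _) ?_
    (by simpa [mul_assoc] using
      (tendsto_one_add_mul_pow_mul_exp_neg_atTop_nhds_zero K n hε).const_mul B)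
  filter_upwards [eventually_ge_atTop 0] with lam hlam
  rw [← mul_assoc, exp_neg, ← div_eq_mul_inv, le_div_iff₀' (exp_pos _)]
  exact h lam hlam

theorem add_mul_sum_range_mul_pow (B L : ℝ) (m : ℕ) :
    B + L * ∑ k ∈ range m, B * (1 + L) ^ k = B * (1 + L) ^ m := by
  rw [← mul_sum]
  linear_combination B * geom_sum_mul (1 + L) m

theorem Fin.sum_Iio_val_eq_sum_range {M : Type*} [AddCommMonoid M] {n : ℕ} (i : Fin n)
    (g : ℕ → M) :
    ∑ j ∈ Iio i, g j = ∑ k ∈ range i, g k := by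
  rw [← Nat.Iio_eq_range, ← Fin.map_valEmbedding_Iio, sum_map]
  rfl

theorem le_mul_one_add_pow_of_le_add_mul_sum_Iio {n : ℕ} {u : Fin n → ℝ} {B L : ℝ}
    (hL : 0 ≤ L) (h : ∀ i, u i ≤ B + L * ∑ j ∈ Iio i, u j) (i : Fin n) :
    u i ≤ B * (1 + L) ^ (i : ℕ) := by
  induction i using WellFoundedLT.induction with
  | ind i ih =>
    calc u i ≤ B + L * ∑ j ∈ Iio i, u j := h i
      _ ≤ B + L * ∑ j ∈ Iio i, B * (1 + L) ^ (j : ℕ) := by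
        gcongr with j hj
        exact ih j (mem_Iio.mp hj)
      _ = B * (1 + L) ^ (i : ℕ) := by
        rw [Fin.sum_Iio_val_eq_sum_range i fun k => B * (1 + L) ^ k, add_mul_sum_range_mul_pow]

theorem add_mul_sum_le_mul_one_add_pow {n : ℕ} {u : Fin n → ℝ} {B L : ℝ}
    (hL : 0 ≤ L) (h : ∀ i, u i ≤ B + L * ∑ j ∈ Iio i, u j) :
    B + L * ∑ j, u j ≤ B * (1 + L) ^ n :=
  calc B + L * ∑ j, u j ≤ B + L * ∑ j : Fin n, B * (1 + L) ^ (j : ℕ) := by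
        gcongr with j
        exact le_mul_one_add_pow_of_le_add_mul_sum_Iio hL h j
    _ = B * (1 + L) ^ n := by
        rw [Fin.sum_univ_eq_sum_range (fun k => B * (1 + L) ^ k), add_mul_sum_range_mul_pow]

section Scheme

variable {E : Type*} [NormedAddCommGroup E] [NormedSpace ℝ E]

theorem norm_inv_smul_sub_le {μ : ℝ} (hμ : 0 < μ) {P : E → E} {M : E}
    (hP : ∀ f g : E, ‖P f - P g‖ ≤ μ * ‖f - g‖) (hPM : P M = μ • M) (x : E) :
    ‖μ⁻¹ • P x - M‖ ≤ ‖x - M‖ := by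
  have hsub : μ⁻¹ • P x - M = μ⁻¹ • (P x - P M) := by
    rw [hPM, smul_sub, inv_smul_smul₀ hμ.ne']
  rw [hsub, norm_smul, norm_inv, norm_of_nonneg hμ.le, inv_mul_le_iff₀ hμ]
  exact hP x M

theorem exp_mul_norm_sub_le {ι : Type*} (s : Finset ι) {γ lam K : ℝ} (hlam : 0 ≤ lam)
    {x₀ M y : E} {b c r : ι → ℝ} {g : ι → E}
    (hb : ∀ j ∈ s, |b j| ≤ K) (hg : ∀ j ∈ s, ‖g j‖ ≤ r j)
    (hy : y = exp (-(γ * lam)) • x₀ + lam • ∑ j ∈ s, (b j * exp (-(γ - c j) * lam)) • g j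
      + (1 - exp (-(γ * lam))) • M) :
    exp (γ * lam) * ‖y - M‖ ≤ ‖x₀ - M‖ + K * lam * ∑ j ∈ s, exp (c j * lam) * r j := by
  have hexp : ∀ j, exp (-(γ - c j) * lam) = exp (-(γ * lam)) * exp (c j * lam) := by
    intro j; rw [← exp_add]; ring_nf
  have hdev : y - M = exp (-(γ * lam)) •
      ((x₀ - M) + lam • ∑ j ∈ s, (b j * exp (c j * lam)) • g j) := by
    have hsum : ∑ j ∈ s, (lam * (b j * (exp (-(γ * lam)) * exp (c j * lam)))) • g j
        = ∑ j ∈ s, (exp (-(γ * lam)) * (lam * (b j * exp (c j * lam)))) • g j :=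
      sum_congr rfl fun j _ => by ring_nf
    simp only [hy, hexp, smul_add, smul_sub, smul_sum, smul_smul, hsum]
    module
  have hterm : ∀ j ∈ s, ‖(b j * exp (c j * lam)) • g j‖ ≤ K * (exp (c j * lam) * r j) := by
    intro j hj
    rw [norm_smul, norm_mul, norm_eq_abs, norm_of_nonneg (exp_pos _).le, mul_assoc]
    exact mul_le_mul (hb j hj) (mul_le_mul_of_nonneg_left (hg j hj) (exp_pos _).le)
      (by positivity) ((abs_nonneg _).trans (hb j hj))
  calc exp (γ * lam) * ‖y - M‖
      = ‖(x₀ - M) + lam • ∑ j ∈ s, (b j * exp (c j * lam)) • g j‖ := by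
        rw [hdev, norm_smul, norm_of_nonneg (exp_pos _).le, ← mul_assoc, ← exp_add,
          add_neg_cancel, exp_zero, one_mul]
    _ ≤ ‖x₀ - M‖ + lam * ∑ j ∈ s, K * (exp (c j * lam) * r j) := by
        refine (norm_add_le _ _).trans (add_le_add_right ?_ _)
        rw [norm_smul, norm_of_nonneg hlam]
        exact mul_le_mul_of_nonneg_left ((norm_sum_le _ _).trans (sum_le_sum hterm)) hlam
    _ = ‖x₀ - M‖ + K * lam * ∑ j ∈ s, exp (c j * lam) * r j := by
        rw [← mul_sum, mul_left_comm, mul_assoc]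

end Scheme

theorem IF_scheme_strong_asymptotic_preservation_general
    {E : Type*} [NormedAddCommGroup E] [NormedSpace ℝ E]
    (ν : ℕ) (hν : 1 ≤ ν)
    (a : Matrix (Fin ν) (Fin ν) ℝ)
    (w : Fin ν → ℝ)
    (c : Fin ν → ℝ) (hcfirst : c ⟨0, hν⟩ = 0) (hcmono : StrictMono c)
    (μ : ℝ) (hμ : 0 < μ) (M : E)
    (P : E → E) (hP : ∀ f g : E, ‖P f - P g‖ ≤ μ * ‖f - g‖)
    (hPM : P M = μ • M)
    (f0 : E) (F : ℝ → Fin ν → E) (f1 : ℝ → E)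
    (hF : ∀ lam : ℝ, 0 ≤ lam → ∀ i, F lam i = Real.exp (-(c i * lam)) • f0
      + lam • ∑ j ∈ Finset.Iio i,
          (a i j * Real.exp (-(c i - c j) * lam)) • (μ⁻¹ • P (F lam j) - M)
      + (1 - Real.exp (-(c i * lam))) • M)
    (hf1 : ∀ lam : ℝ, 0 ≤ lam → f1 lam = Real.exp (-lam) • f0
      + lam • ∑ i, (w i * Real.exp (-(1 - c i) * lam)) • (μ⁻¹ • P (F lam i) - M)
      + (1 - Real.exp (-lam)) • M) :
    (∀ i : Fin ν, 0 < (i : ℕ) → Tendsto (fun lam => F lam i) atTop (nhds M)) ∧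
    Tendsto f1 atTop (nhds M) := by
  obtain ⟨K, hK⟩ := Finite.exists_le (Sum.elim (fun p : Fin ν × Fin ν => |a p.1 p.2|) (|w ·|))
  have hK0 : 0 ≤ K := (abs_nonneg _).trans (hK (.inr ⟨0, hν⟩))
  have hG := norm_inv_smul_sub_le hμ hP hPM
  set u : ℝ → Fin ν → ℝ := fun lam i => exp (c i * lam) * ‖F lam i - M‖
  have hrec : ∀ lam, 0 ≤ lam → ∀ i, u lam i ≤ ‖f0 - M‖ + K * lam * ∑ j ∈ Iio i, u lam j :=
    fun lam hlam i => exp_mul_norm_sub_le _ hlam (fun j _ => hK (.inl (i, j))) (fun j _ => hG _)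
      (hF lam hlam i)
  have hL : ∀ lam, 0 ≤ lam → 0 ≤ K * lam := fun lam hlam => mul_nonneg hK0 hlam
  have hstage : ∀ lam, 0 ≤ lam → ∀ i, u lam i ≤ ‖f0 - M‖ * (1 + K * lam) ^ (i : ℕ) :=
    fun lam hlam => le_mul_one_add_pow_of_le_add_mul_sum_Iio (hL lam hlam) (hrec lam hlam)
  have hupdate : ∀ lam, 0 ≤ lam →
      exp (1 * lam) * ‖f1 lam - M‖ ≤ ‖f0 - M‖ * (1 + K * lam) ^ ν := fun lam hlam =>
    (exp_mul_norm_sub_le _ hlam (fun i _ => hK (.inr i)) (fun i _ => hG _)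
      (by simpa only [one_mul] using hf1 lam hlam)).trans
    (add_mul_sum_le_mul_one_add_pow (hL lam hlam) (hrec lam hlam))
  refine ⟨fun i hi => tendsto_nhds_of_exp_mul_norm_sub_le ?_ (hstage · · i),
    tendsto_nhds_of_exp_mul_norm_sub_le one_pos hupdate⟩
  simpa [hcfirst] using hcmono (show (⟨0, hν⟩ : Fin ν) < i from hi)

/-- strong asymptotic preservation of the integrating factor scheme
under the strict node conditions `0 = c_1 < c_2 < … < c_ν < 1`: every stage
`F⁽ⁱ⁾(λ)` with `i ≥ 2` and the update `f¹(λ)` converge to `M` as `λ → ∞`. -/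
theorem IF_scheme_strong_asymptotic_preservation
    {E : Type*} [NormedAddCommGroup E] [NormedSpace ℝ E]
    (ν : ℕ) (hν : 1 ≤ ν)
    (a : Matrix (Fin ν) (Fin ν) ℝ) (ha0 : ∀ i j : Fin ν, i ≤ j → a i j = 0)
    (w : Fin ν → ℝ)
    (c : Fin ν → ℝ) (hcfirst : c ⟨0, hν⟩ = 0) (hcmono : StrictMono c)
    (hc1 : ∀ i, c i < 1)
    (μ : ℝ) (hμ : 0 < μ) (M : E)
    (P : E → E) (hP : ∀ f g : E, ‖P f - P g‖ ≤ μ * ‖f - g‖)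
    (hPM : P M = μ • M)
    (f0 : E) (F : ℝ → Fin ν → E) (f1 : ℝ → E)
    (hF : ∀ lam : ℝ, 0 ≤ lam → ∀ i, F lam i = Real.exp (-(c i * lam)) • f0
      + lam • ∑ j ∈ Finset.Iio i,
          (a i j * Real.exp (-(c i - c j) * lam)) • (μ⁻¹ • P (F lam j) - M)
      + (1 - Real.exp (-(c i * lam))) • M)
    (hf1 : ∀ lam : ℝ, 0 ≤ lam → f1 lam = Real.exp (-lam) • f0
      + lam • ∑ i, (w i * Real.exp (-(1 - c i) * lam)) • (μ⁻¹ • P (F lam i) - M)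
      + (1 - Real.exp (-lam)) • M) :
    (∀ i : Fin ν, 0 < (i : ℕ) → Tendsto (fun lam => F lam i) atTop (nhds M)) ∧
    Tendsto f1 atTop (nhds M) :=
  IF_scheme_strong_asymptotic_preservation_general ν hν a w c hcfirst hcmono μ hμ M P hP hPM f0 F f1
    hF hf1
end

section
/- Let S be a set and E the space of real-valued functions on S with pointwise order. Consider the exponential Runge–Kutta scheme in E: F⁽ⁱ⁾ = e^{−c_iλ} f⁰ + λ ∑_{j<i} A_{ij}(λ)(𝒫(F⁽ʲ⁾)/μ − M) + (1 − e^{−c_iλ}) M for i = 1,…,ν and f¹ = e^{−λ} f⁰ + λ ∑_{i=1}^{ν} W_i(λ)(𝒫(F⁽ⁱ⁾)/μ − M) + (1 − e^{−λ}) M, with λ ≥ 0, μ > 0, c_i ≥ 0. Assume: A_{ij}(λ) ≥ 0 and W_i(λ) ≥ 0; λ ∑_{j<i} A_{ij}(λ) ≤ 1 − e^{−c_iλ} for each i; λ ∑_{i=1}^{ν} W_i(λ) ≤ 1 − e^{−λ}; f⁰ ≥ 0 pointwise, M ≥ 0 pointwise, and 𝒫(g) ≥ 0 pointwise whenever g ≥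 0 pointwise. Then every stage satisfies F⁽ⁱ⁾ ≥ 0 pointwise and the update satisfies f¹ ≥ 0 pointwise. -/
/-!
Each stage, and the update, is `a • f⁰ + t • ∑ⱼ wⱼ • (gⱼ - M) + (1 - a) • M` with `a = e^{-cλ}`.
Regrouped as `a • f⁰ + t • ∑ⱼ wⱼ • gⱼ + (1 - a - t ∑ⱼ wⱼ) • M`, the convexity conditions make
all three coefficients nonnegative, so the combination is nonnegative once the gain terms
`gⱼ = 𝒫(F⁽ʲ⁾)/μ` are; for the explicit scheme this holds by strong induction on the stage index.
-/

section ExpRKStage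

variable {ι E : Type*} [AddCommGroup E] [Module ℝ E]

/-- A stage (or the update) of an exponential Runge–Kutta scheme: `a = e^{-cλ}`, `t = λ`,
`w` a row of `A` (or `W`), `g j = 𝒫(F⁽ʲ⁾)/μ` and `m = M`. -/
def expRKStage (a t : ℝ) (s : Finset ι) (w : ι → ℝ) (f : E) (g : ι → E) (m : E) : E :=
  a • f + t • ∑ j ∈ s, w j • (g j - m) + (1 - a) • m

theorem expRKStage_eq (a t : ℝ) (s : Finset ι) (w : ι → ℝ) (f : E) (g : ι → E) (m : E) :
    expRKStage a t s w f g m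
      = a • f + t • ∑ j ∈ s, w j • g j + (1 - a - t * ∑ j ∈ s, w j) • m := by
  have hsum : ∑ j ∈ s, w j • (g j - m) = ∑ j ∈ s, w j • g j - (∑ j ∈ s, w j) • m := by
    simp only [smul_sub, Finset.sum_sub_distrib, Finset.sum_smul]
  rw [expRKStage, hsum]
  module

variable [PartialOrder E] [IsOrderedAddMonoid E] [PosSMulMono ℝ E]

theorem expRKStage_nonneg {a t : ℝ} {s : Finset ι} {w : ι → ℝ} {f : E} {g : ι → E} {m : E}
    (ha : 0 ≤ a) (ht : 0 ≤ t) (hw : ∀ j ∈ s, 0 ≤ w j) (hf : 0 ≤ f) (hg : ∀ j ∈ s, 0 ≤ g j)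
    (hm : 0 ≤ m) (hts : t * ∑ j ∈ s, w j ≤ 1 - a) :
    0 ≤ expRKStage a t s w f g m := by
  rw [expRKStage_eq]
  have hgain : 0 ≤ ∑ j ∈ s, w j • g j :=
    Finset.sum_nonneg fun j hj => smul_nonneg (hw j hj) (hg j hj)
  have hM : 0 ≤ (1 - a - t * ∑ j ∈ s, w j) • m := smul_nonneg (by linarith) hm
  exact add_nonneg (add_nonneg (smul_nonneg ha hf) (smul_nonneg ht hgain)) hM

end ExpRKStage

theorem expRK_unconditional_positivity_general
    {S : Type*} (ν : ℕ) (lam : ℝ) (hlam : 0 ≤ lam)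
    (μ : ℝ) (hμ : 0 < μ) (c : Fin ν → ℝ)
    (A : Matrix (Fin ν) (Fin ν) ℝ) (W : Fin ν → ℝ)
    (hAnn : ∀ i j, 0 ≤ A i j) (hWnn : ∀ i, 0 ≤ W i)
    (hArow : ∀ i, lam * ∑ j ∈ Finset.Iio i, A i j ≤ 1 - Real.exp (-(c i * lam)))
    (hWsum : lam * ∑ i, W i ≤ 1 - Real.exp (-lam))
    (P : (S → ℝ) → (S → ℝ)) (hP : ∀ g : S → ℝ, (∀ x, 0 ≤ g x) → ∀ x, 0 ≤ P g x)
    (M f0 : S → ℝ) (hM : ∀ x, 0 ≤ M x) (hf0 : ∀ x, 0 ≤ f0 x)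
    (F : Fin ν → S → ℝ) (f1 : S → ℝ)
    (hF : ∀ i, F i = Real.exp (-(c i * lam)) • f0
      + lam • ∑ j ∈ Finset.Iio i, A i j • (μ⁻¹ • P (F j) - M)
      + (1 - Real.exp (-(c i * lam))) • M)
    (hf1 : f1 = Real.exp (-lam) • f0 + lam • ∑ i, W i • (μ⁻¹ • P (F i) - M)
      + (1 - Real.exp (-lam)) • M) :
    (∀ i x, 0 ≤ F i x) ∧ ∀ x, 0 ≤ f1 x := by
  have hgain : ∀ g : S → ℝ, 0 ≤ g → 0 ≤ μ⁻¹ • P g :=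
    fun g hg => smul_nonneg (inv_nonneg.2 hμ.le) (hP g hg)
  have hstage : ∀ i, 0 ≤ F i := by
    intro i
    induction i using WellFoundedLT.induction with
    | _ i ih =>
      rw [hF i]
      exact expRKStage_nonneg (Real.exp_nonneg _) hlam (fun j _ => hAnn i j) hf0
        (fun j hj => hgain _ (ih j (Finset.mem_Iio.1 hj))) hM (hArow i)
  refine ⟨hstage, ?_⟩
  rw [hf1]
  exact expRKStage_nonneg (Real.exp_nonneg _) hlam (fun i _ => hWnn i) hf0
    (fun i _ => hgain _ (hstage i)) hM hWsum

/-- unconditional positivity of the exponential Runge–Kutta scheme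
on the space of real-valued functions, under the convexity conditions
`λ ∑_{j<i} A_{ij}(λ) ≤ 1 - e^{-c_iλ}` and `λ ∑_i W_i(λ) ≤ 1 - e^{-λ}`. -/
theorem expRK_unconditional_positivity
    {S : Type*} (ν : ℕ) (hν : 1 ≤ ν) (lam : ℝ) (hlam : 0 ≤ lam)
    (μ : ℝ) (hμ : 0 < μ) (c : Fin ν → ℝ) (hc : ∀ i, 0 ≤ c i)
    (A : Matrix (Fin ν) (Fin ν) ℝ) (W : Fin ν → ℝ)
    (hAnn : ∀ i j, 0 ≤ A i j) (hWnn : ∀ i, 0 ≤ W i)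
    (hArow : ∀ i, lam * ∑ j ∈ Finset.Iio i, A i j ≤ 1 - Real.exp (-(c i * lam)))
    (hWsum : lam * ∑ i, W i ≤ 1 - Real.exp (-lam))
    (P : (S → ℝ) → (S → ℝ)) (hP : ∀ g : S → ℝ, (∀ x, 0 ≤ g x) → ∀ x, 0 ≤ P g x)
    (M f0 : S → ℝ) (hM : ∀ x, 0 ≤ M x) (hf0 : ∀ x, 0 ≤ f0 x)
    (F : Fin ν → S → ℝ) (f1 : S → ℝ)
    (hF : ∀ i, F i = Real.exp (-(c i * lam)) • f0
      + lam • ∑ j ∈ Finset.Iio i, A i j • (μ⁻¹ • P (F j) - M)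
      + (1 - Real.exp (-(c i * lam))) • M)
    (hf1 : f1 = Real.exp (-lam) • f0 + lam • ∑ i, W i • (μ⁻¹ • P (F i) - M)
      + (1 - Real.exp (-lam)) • M) :
    (∀ i x, 0 ≤ F i x) ∧ ∀ x, 0 ≤ f1 x :=
  expRK_unconditional_positivity_general ν lam hlam μ hμ c A W hAnn hWnn hArow hWsum P hP M f0 hM
    hf0 F f1 hF hf1
end

section
/- Let V be a real vector space, S ⊆ V a convex set, and H : V → ℝ a function that is convex on S. Consider the exponential Runge–Kutta scheme F⁽ⁱ⁾ = e^{−c_iλ} f⁰ + λ ∑_{j<i} A_{ij}(λ)(𝒫(F⁽ʲ⁾)/μ − M) + (1 − e^{−c_iλ}) M for i = 1,…,ν and f¹ = e^{−λ} f⁰ + λ ∑_{i=1}^{ν} W_i(λ)(𝒫(F⁽ⁱ⁾)/μ − M) + (1 − e^{−λ}) M, with λ ≥ 0, μ > 0, c_i ≥ 0. Assume: A_{ij}(λ) ≥ 0, W_i(λ) ≥ 0, λ ∑_{j<i} A_{ij}(λ) ≤ 1 − e^{−c_iλ} for each i, λ ∑_{i=1}^{ν} W_i(λ) ≤ 1 −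 e^{−λ}; f⁰ ∈ S, M ∈ S; for every g ∈ S one has 𝒫(g)/μ ∈ S and H(𝒫(g)/μ) ≤ H(g); and H(M) ≤ H(f⁰). Then every stage satisfies F⁽ⁱ⁾ ∈ S with H(F⁽ⁱ⁾) ≤ H(f⁰), and the update satisfies f¹ ∈ S with H(f¹) ≤ H(f⁰). -/
/-!
Every stage is a convex combination of `f⁰`, `M` and the gain terms `𝒫(F⁽ʲ⁾)/μ` of earlier
stages: the coefficient conditions say exactly that the weights are nonnegative and the
weight left over for `M` is `1 - e^{-cλ} - λ∑A ≥ 0`. Hence everything stays in the sublevel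
set `{x ∈ S | H x ≤ H f⁰}`, which is convex because `H` is, and which is closed under
`g ↦ 𝒫(g)/μ`; strong induction over the stages finishes the argument.
-/

open Finset

section ConvexCombination

variable {𝕜 E ι : Type*} [Field 𝕜] [LinearOrder 𝕜] [IsStrictOrderedRing 𝕜]
  [AddCommGroup E] [Module 𝕜 E] {K : Set E}

theorem Convex.add_sum_smul_sub_mem (hK : Convex 𝕜 K) {x : E} (hx : x ∈ K) {t : Finset ι}
    {w : ι → 𝕜} {z : ι → E} (hw : ∀ i ∈ t, 0 ≤ w i) (hw1 : ∑ i ∈ t, w i ≤ 1)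
    (hz : ∀ i ∈ t, z i ∈ K) : x + ∑ i ∈ t, w i • (z i - x) ∈ K := by
  have hcombo : x + ∑ i ∈ t, w i • (z i - x)
      = ∑ o ∈ insertNone t, Option.elim o (1 - ∑ i ∈ t, w i) w • Option.elim o x z := by
    simp only [sum_insertNone, Option.elim_none, Option.elim_some, smul_sub, sum_sub_distrib,
      ← sum_smul, sub_smul, one_smul]
    abel
  rw [hcombo]
  refine hK.sum_mem ?_ ?_ ?_
  · rintro (_ | i) hi
    · exact sub_nonneg.mpr hw1
    · exact hw i (mem_insertNone.mp hi _ rfl)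
  · simp [sum_insertNone]
  · rintro (_ | i) hi
    · exact hx
    · exact hz i (mem_insertNone.mp hi _ rfl)

theorem Convex.expRK_stage_mem (hK : Convex 𝕜 K) {f0 M : E} (hf0 : f0 ∈ K) (hM : M ∈ K)
    {a lam : 𝕜} (ha : 0 ≤ a) (hlam : 0 ≤ lam) {t : Finset ι} {u : ι → 𝕜} {g : ι → E}
    (hu : ∀ j ∈ t, 0 ≤ u j) (hsum : lam * ∑ j ∈ t, u j ≤ 1 - a) (hg : ∀ j ∈ t, g j ∈ K) :
    a • f0 + lam • ∑ j ∈ t, u j • (g j - M) + (1 - a) • M ∈ K := by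
  have hstage : a • f0 + lam • ∑ j ∈ t, u j • (g j - M) + (1 - a) • M
      = M + ∑ o ∈ insertNone t, Option.elim o a (fun j ↦ lam * u j) • (Option.elim o f0 g - M) := by
    simp only [sum_insertNone, Option.elim_none, Option.elim_some, smul_sum, smul_smul,
      smul_sub, sub_smul, one_smul]
    abel
  rw [hstage]
  refine hK.add_sum_smul_sub_mem hM ?_ ?_ ?_
  · rintro (_ | j) hj
    · exact ha
    · exact mul_nonneg hlam (hu j (mem_insertNone.mp hj _ rfl))
  · simp only [sum_insertNone, Option.elim_none, Option.elim_some, ← mul_sum]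
    linarith
  · rintro (_ | j) hj
    · exact hf0
    · exact hg j (mem_insertNone.mp hj _ rfl)

end ConvexCombination

theorem expRK_unconditional_entropy_general
    {V : Type*} [AddCommGroup V] [Module ℝ V]
    (S : Set V) (H : V → ℝ) (hH : ConvexOn ℝ S H)
    (ν : ℕ) (lam : ℝ) (hlam : 0 ≤ lam)
    (μ : ℝ) (c : Fin ν → ℝ)
    (A : Matrix (Fin ν) (Fin ν) ℝ) (W : Fin ν → ℝ)
    (hAnn : ∀ i j, 0 ≤ A i j) (hWnn : ∀ i, 0 ≤ W i)
    (hArow : ∀ i, lam * ∑ j ∈ Finset.Iio i, A i j ≤ 1 - Real.exp (-(c i * lam)))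
    (hWsum : lam * ∑ i, W i ≤ 1 - Real.exp (-lam))
    (P : V → V) (M f0 : V) (hf0S : f0 ∈ S) (hMS : M ∈ S)
    (hPS : ∀ g ∈ S, μ⁻¹ • P g ∈ S)
    (hPH : ∀ g ∈ S, H (μ⁻¹ • P g) ≤ H g)
    (hHM : H M ≤ H f0)
    (F : Fin ν → V) (f1 : V)
    (hF : ∀ i, F i = Real.exp (-(c i * lam)) • f0
      + lam • ∑ j ∈ Finset.Iio i, A i j • (μ⁻¹ • P (F j) - M)
      + (1 - Real.exp (-(c i * lam))) • M)
    (hf1 : f1 = Real.exp (-lam) • f0 + lam • ∑ i, W i • (μ⁻¹ • P (F i) - M)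
      + (1 - Real.exp (-lam)) • M) :
    (∀ i, F i ∈ S ∧ H (F i) ≤ H f0) ∧ (f1 ∈ S ∧ H f1 ≤ H f0) := by
  set K := {x ∈ S | H x ≤ H f0}
  have hK : Convex ℝ K := hH.convex_le (H f0)
  have hf0K : f0 ∈ K := ⟨hf0S, le_rfl⟩
  have hMK : M ∈ K := ⟨hMS, hHM⟩
  have hPK : ∀ g ∈ K, μ⁻¹ • P g ∈ K := fun g hg ↦ ⟨hPS g hg.1, (hPH g hg.1).trans hg.2⟩
  have hFK : ∀ i, F i ∈ K := by
    intro i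
    induction i using WellFoundedLT.induction with
    | ind i ih =>
      rw [hF i]
      exact hK.expRK_stage_mem hf0K hMK (Real.exp_nonneg _) hlam (fun j _ ↦ hAnn i j) (hArow i)
        fun j hj ↦ hPK _ (ih j (mem_Iio.mp hj))
  refine ⟨hFK, ?_⟩
  rw [hf1]
  exact hK.expRK_stage_mem hf0K hMK (Real.exp_nonneg _) hlam (fun j _ ↦ hWnn j) hWsum
    fun j _ ↦ hPK _ (hFK j)

/-- unconditional entropic stability of the exponential Runge–Kutta
scheme: under the convexity conditions on the coefficients, if `S` is convex,
`H` is convex on `S`, `𝒫(g)/μ ∈ S` with `H(𝒫(g)/μ) ≤ H(g)` for `g ∈ S`, and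
`H(M) ≤ H(f⁰)`, then all stages and the update stay in `S` with entropy `≤ H(f⁰)`. -/
theorem expRK_unconditional_entropy
    {V : Type*} [AddCommGroup V] [Module ℝ V]
    (S : Set V) (hS : Convex ℝ S) (H : V → ℝ) (hH : ConvexOn ℝ S H)
    (ν : ℕ) (hν : 1 ≤ ν) (lam : ℝ) (hlam : 0 ≤ lam)
    (μ : ℝ) (hμ : 0 < μ) (c : Fin ν → ℝ) (hc : ∀ i, 0 ≤ c i)
    (A : Matrix (Fin ν) (Fin ν) ℝ) (W : Fin ν → ℝ)
    (hAnn : ∀ i j, 0 ≤ A i j) (hWnn : ∀ i, 0 ≤ W i)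
    (hArow : ∀ i, lam * ∑ j ∈ Finset.Iio i, A i j ≤ 1 - Real.exp (-(c i * lam)))
    (hWsum : lam * ∑ i, W i ≤ 1 - Real.exp (-lam))
    (P : V → V) (M f0 : V) (hf0S : f0 ∈ S) (hMS : M ∈ S)
    (hPS : ∀ g ∈ S, μ⁻¹ • P g ∈ S)
    (hPH : ∀ g ∈ S, H (μ⁻¹ • P g) ≤ H g)
    (hHM : H M ≤ H f0)
    (F : Fin ν → V) (f1 : V)
    (hF : ∀ i, F i = Real.exp (-(c i * lam)) • f0
      + lam • ∑ j ∈ Finset.Iio i, A i j • (μ⁻¹ • P (F j) - M)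
      + (1 - Real.exp (-(c i * lam))) • M)
    (hf1 : f1 = Real.exp (-lam) • f0 + lam • ∑ i, W i • (μ⁻¹ • P (F i) - M)
      + (1 - Real.exp (-lam)) • M) :
    (∀ i, F i ∈ S ∧ H (F i) ≤ H f0) ∧ (f1 ∈ S ∧ H f1 ≤ H f0) :=
  expRK_unconditional_entropy_general S H hH ν lam hlam μ c A W hAnn hWnn hArow hWsum P M f0 hf0S
    hMS hPS hPH hHM F f1 hF hf1
end

section
/- Let s ≥ 1, let a_1, …, a_s ≥ 0 and c_1, …, c_s ≥ 0 be real numbers, and let c > 0. If ∑_{j=1}^{s} a_j c_j^k ≤ c^{k+1}/(k+1) for every integer k ≥ 0, then for every λ > 0 one has ∑_{j=1}^{s} a_j e^{c_j λ} ≤ (e^{cλ} − 1)/λ. In particular, taking c = 1: if w_1, …, w_s ≥ 0 and c_1, …, c_s ≥ 0 satisfy ∑_i w_i c_i^k ≤ 1/(k+1) for all k ≥ 0, then ∑_i w_i e^{c_i λ} ≤ (e^{λ} − 1)/λ for all λ > 0. -/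
/-!
Both sides are power series in `λ`: `∑ⱼ aⱼ e^{cⱼ λ} = ∑ₖ λᵏ/k! · ∑ⱼ aⱼ cⱼᵏ` and
`(e^{Cλ} - 1)/λ = ∑ₖ λᵏ/k! · C^{k+1}/(k+1)`. For `λ > 0` every weight `λᵏ/k!` is nonnegative,
so the moment bounds compare the two series term by term.
-/

open Nat

theorem Real.hasSum_pow_div_factorial (x : ℝ) :
    HasSum (fun n : ℕ => x ^ n / n !) (Real.exp x) := by
  rw [Real.exp_eq_exp_ℝ]
  exact NormedSpace.expSeries_div_hasSum_exp x

theorem hasSum_sum_mul_exp {ι : Type*} [Fintype ι] (a c : ι → ℝ) (lam : ℝ) :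
    HasSum (fun k : ℕ => lam ^ k / k ! * ∑ j, a j * c j ^ k)
      (∑ j, a j * Real.exp (c j * lam)) := by
  refine (hasSum_sum fun j _ => (Real.hasSum_pow_div_factorial (c j * lam)).mul_left (a j)).congr_fun
    fun k => ?_
  rw [Finset.mul_sum]
  exact Finset.sum_congr rfl fun j _ => by rw [mul_pow]; ring

theorem hasSum_exp_sub_one_div (C : ℝ) {lam : ℝ} (hlam : lam ≠ 0) :
    HasSum (fun k : ℕ => lam ^ k / k ! * (C ^ (k + 1) / ((k : ℝ) + 1)))
      ((Real.exp (C * lam) - 1) / lam) := by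
  have htail : HasSum (fun k : ℕ => (C * lam) ^ (k + 1) / (k + 1)!) (Real.exp (C * lam) - 1) := by
    simpa using (hasSum_nat_add_iff' 1).mpr (Real.hasSum_pow_div_factorial (C * lam))
  refine (htail.div_const lam).congr_fun fun k => ?_
  rw [Nat.factorial_succ, mul_pow]
  push_cast
  field_simp
  ring

theorem sum_mul_exp_le_of_sum_mul_pow_le {ι : Type*} [Fintype ι] (a c : ι → ℝ) (C : ℝ)
    (h : ∀ k : ℕ, ∑ j, a j * c j ^ k ≤ C ^ (k + 1) / ((k : ℝ) + 1)) {lam : ℝ} (hlam : 0 < lam) :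
    ∑ j, a j * Real.exp (c j * lam) ≤ (Real.exp (C * lam) - 1) / lam :=
  hasSum_le (fun k => mul_le_mul_of_nonneg_left (h k) (by positivity))
    (hasSum_sum_mul_exp a c lam) (hasSum_exp_sub_one_div C hlam.ne')

theorem taylor_coefficient_convexity_criterion_general
    (s : ℕ) (a c : Fin s → ℝ) (C : ℝ)
    (h : ∀ k : ℕ, ∑ j, a j * c j ^ k ≤ C ^ (k + 1) / ((k : ℝ) + 1)) :
    (∀ lam : ℝ, 0 < lam →
      ∑ j, a j * Real.exp (c j * lam) ≤ (Real.exp (C * lam) - 1) / lam) ∧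
    (∀ w cv : Fin s → ℝ, (∀ i, 0 ≤ w i) → (∀ i, 0 ≤ cv i) →
      (∀ k : ℕ, ∑ i, w i * cv i ^ k ≤ 1 / ((k : ℝ) + 1)) →
      ∀ lam : ℝ, 0 < lam →
        ∑ i, w i * Real.exp (cv i * lam) ≤ (Real.exp lam - 1) / lam) := by
  refine ⟨fun lam hlam => sum_mul_exp_le_of_sum_mul_pow_le a c C h hlam, ?_⟩
  intro w cv _ _ hw lam hlam
  simpa using sum_mul_exp_le_of_sum_mul_pow_le w cv 1 (by simpa using hw) hlam

/-- if `∑_j a_j c_j^k ≤ C^{k+1}/(k+1)` for all `k ≥ 0` then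
`∑_j a_j e^{c_j λ} ≤ (e^{Cλ} - 1)/λ` for all `λ > 0`; in particular (`C = 1`)
`∑_i w_i c_i^k ≤ 1/(k+1)` implies `∑_i w_i e^{c_i λ} ≤ (e^λ - 1)/λ`. -/
theorem taylor_coefficient_convexity_criterion
    (s : ℕ) (hs : 1 ≤ s) (a c : Fin s → ℝ)
    (ha : ∀ j, 0 ≤ a j) (hc : ∀ j, 0 ≤ c j) (C : ℝ) (hC : 0 < C)
    (h : ∀ k : ℕ, ∑ j, a j * c j ^ k ≤ C ^ (k + 1) / ((k : ℝ) + 1)) :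
    (∀ lam : ℝ, 0 < lam →
      ∑ j, a j * Real.exp (c j * lam) ≤ (Real.exp (C * lam) - 1) / lam) ∧
    (∀ w cv : Fin s → ℝ, (∀ i, 0 ≤ w i) → (∀ i, 0 ≤ cv i) →
      (∀ k : ℕ, ∑ i, w i * cv i ^ k ≤ 1 / ((k : ℝ) + 1)) →
      ∀ lam : ℝ, 0 < lam →
        ∑ i, w i * Real.exp (cv i * lam) ≤ (Real.exp lam - 1) / lam) :=
  taylor_coefficient_convexity_criterion_general s a c C h
end

section
/- Let w ∈ (0,1] be a real number. Then the inequalities w^{k−1} ≥ (k+1)/2^k hold for every integer k ≥ 0 if and only if w ≥ 3/4. -/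
/-! The instance `k = 2` is exactly `3 / 4 ≤ w`. Conversely, since `w ^ (k - 1)` is monotone in `w`,
for `k ≥ 1` it suffices to treat `w = 3/4`, where the inequality becomes Bernoulli's
`1 + (k - 1) / 2 ≤ (3/2) ^ (k - 1)`; the case `k = 0` is `1 ≤ w⁻¹`. -/

lemma natCast_add_two_div_two_pow_succ_le (n : ℕ) :
    ((n : ℝ) + 2) / 2 ^ (n + 1) ≤ (3 / 4) ^ n := by
  rw [div_le_iff₀ (by positivity)]
  have bernoulli : 1 + (n : ℝ) * (1 / 2) ≤ (1 + 1 / 2) ^ n :=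
    one_add_mul_le_pow (by norm_num) n
  calc (n : ℝ) + 2 = 2 * (1 + n * (1 / 2)) := by ring
    _ ≤ 2 * (1 + 1 / 2) ^ n := by gcongr
    _ = (3 / 4) ^ n * 2 ^ (n + 1) := by rw [pow_succ, ← mul_assoc, ← mul_pow]; norm_num [mul_comm]

/-- for `w ∈ (0,1]`, the inequalities `w^{k-1} ≥ (k+1)/2^k` hold for
every integer `k ≥ 0` if and only if `w ≥ 3/4`. -/
theorem midpoint_family_convexity_iff (w : ℝ) (hw : w ∈ Set.Ioc (0 : ℝ) 1) :
    (∀ k : ℕ, ((k : ℝ) + 1) / 2 ^ k ≤ w ^ ((k : ℤ) - 1)) ↔ 3 / 4 ≤ w := by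
  obtain ⟨hw0, hw1⟩ := hw
  constructor
  · intro h
    have h2 := h 2
    norm_num at h2
    exact h2
  · intro h34 k
    cases k with
    | zero => simpa using (one_le_inv₀ hw0).mpr hw1
    | succ n =>
      have hexp : ((n + 1 : ℕ) : ℤ) - 1 = n := by push_cast; ring
      rw [hexp, zpow_natCast, Nat.cast_succ, add_assoc, one_add_one_eq_two]
      calc ((n : ℝ) + 2) / 2 ^ (n + 1) ≤ (3 / 4) ^ n := natCast_add_two_div_two_pow_succ_le n
        _ ≤ w ^ n := pow_le_pow_left₀ (by norm_num) h34 n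
end

section
/- Let λ ≥ 0 and λ_p ≥ 0 be real numbers. Then (|1 + λ − λ_p| + λ_p) e^{−λ} ≤ 1 if and only if 2λ_p ≤ λ + 1 + e^{λ}. -/
/-! Since `|a - b| + b = max a (2b - a)`, the contraction factor is `max (1 + λ) (2λ_p - 1 - λ) · e^{-λ}`.
The first branch never exceeds `1` because `1 + λ ≤ e^λ`, so contractivity is exactly the condition
`2λ_p - 1 - λ ≤ e^λ` on the second branch. -/

theorem abs_sub_add_eq_max {α : Type*} [AddCommGroup α] [LinearOrder α] [IsOrderedAddMonoid α]
    (a b : α) : |a - b| + b = max a (b + b - a) := by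
  rw [abs_eq_max_neg, ← max_add_add_right, neg_sub, sub_add_cancel, sub_add_eq_add_sub]

theorem Real.mul_exp_neg_le_one_iff (a x : ℝ) : a * Real.exp (-x) ≤ 1 ↔ a ≤ Real.exp x := by
  rw [Real.exp_neg, ← div_eq_mul_inv, div_le_one (Real.exp_pos x)]

theorem first_order_IF_penalized_contractivity_iff_general
    (lam lamp : ℝ) :
    (|1 + lam - lamp| + lamp) * Real.exp (-lam) ≤ 1 ↔
      2 * lamp ≤ lam + 1 + Real.exp lam := by
  rw [abs_sub_add_eq_max, Real.mul_exp_neg_le_one_iff, max_le_iff,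
    and_iff_right (by linarith [Real.add_one_le_exp lam])]
  constructor <;> intro h <;> linarith

/-- contraction factor of the penalized first order IF scheme:
for `λ ≥ 0`, `λ_p ≥ 0`, `(|1 + λ - λ_p| + λ_p) e^{-λ} ≤ 1 ↔ 2λ_p ≤ λ + 1 + e^λ`. -/
theorem first_order_IF_penalized_contractivity_iff
    (lam lamp : ℝ) (hlam : 0 ≤ lam) (hlamp : 0 ≤ lamp) :
    (|1 + lam - lamp| + lamp) * Real.exp (-lam) ≤ 1 ↔
      2 * lamp ≤ lam + 1 + Real.exp lam :=
  first_order_IF_penalized_contractivity_iff_general lam lamp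
end
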